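/- Let x* ∈ ℝ^n with support I* = supp(x*) and b = Ax*. Let I ⊆ {1,…,n}, and suppose A satisfies the RIP of order |I ∪ I*| with constant δ < 1. Let x be a least-squares solution on support I. Then ‖(x − x*)_I‖ ≤ (δ/√(1−δ²)) ‖(x*)_{I*\I}‖, where moreover ‖(x − x*)_I‖² = ‖(x − x*)_{I ∩ I*}‖² + ‖x_{I\I*}‖². -/
import Mathlib


open Finset Matrix

noncomputable def nrm {d : ℕ} (x : Fin d → ℝ) : ℝ := Real.sqrt (∑ i, (x i)^2)

noncomputable def supp {d : ℕ} (x : Fin d → ℝ) : Finset (Fin d) := Finset.univ.filter (fun i => x i ≠ 0)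

def restr {d : ℕ} (x : Fin d → ℝ) (I : Finset (Fin d)) : Fin d → ℝ := fun i => if i ∈ I then x i else 0

noncomputable def dotp {d : ℕ} (x y : Fin d → ℝ) : ℝ := ∑ i, x i * y i

def RIP {m n : ℕ} (A : Matrix (Fin m) (Fin n) ℝ) (s : ℕ) (δ : ℝ) : Prop :=
  0 ≤ δ ∧ δ < 1 ∧ ∀ x : Fin n → ℝ, (supp x).card ≤ s →
    (1 - δ) * (nrm x)^2 ≤ (nrm (A.mulVec x))^2 ∧ (nrm (A.mulVec x))^2 ≤ (1 + δ) * (nrm x)^2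

def lsSol {m n : ℕ} (A : Matrix (Fin m) (Fin n) ℝ) (b : Fin m → ℝ) (I : Finset (Fin n)) (x : Fin n → ℝ) : Prop :=
  supp x ⊆ I ∧ ∀ i ∈ I, Aᵀ.mulVec (A.mulVec x - b) i = 0

noncomputable def obj {m n : ℕ} (A : Matrix (Fin m) (Fin n) ℝ) (b : Fin m → ℝ) (x : Fin n → ℝ) : ℝ :=
  (1/2) * (nrm (A.mulVec x - b))^2

lemma nrm_sq' {d : ℕ} (z : Fin d → ℝ) : (nrm z)^2 = ∑ i, (z i)^2 :=
  Real.sq_sqrt (Finset.sum_nonneg fun _ _ => sq_nonneg _)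

set_option maxHeartbeats 1000000 in
theorem stmt15 {m n : ℕ} (A : Matrix (Fin m) (Fin n) ℝ) (xstar : Fin n → ℝ)
    (Istar : Finset (Fin n)) (hIstar : Istar = supp xstar)
    (b : Fin m → ℝ) (hb : b = A.mulVec xstar)
    (I : Finset (Fin n)) (δ : ℝ) (hRIP : RIP A ((I ∪ Istar).card) δ)
    (x : Fin n → ℝ) (hx : lsSol A b I x) :
    nrm (restr (fun i => x i - xstar i) I)
        ≤ (δ / Real.sqrt (1 - δ^2)) * nrm (restr xstar (Istar \ I)) ∧
    (nrm (restr (fun i => x i - xstar i) I))^2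
        = (nrm (restr (fun i => x i - xstar i) (I ∩ Istar)))^2
          + (nrm (restr x (I \ Istar)))^2 := by
  obtain ⟨hδ0, hδ1, hrip⟩ := hRIP
  obtain ⟨hxsupp, hls⟩ := hx
  have hxstar0 : ∀ i, i ∉ Istar → xstar i = 0 := by
    intro i hi
    by_contra h
    exact hi (by rw [hIstar]; simp [supp, h])
  have hx0 : ∀ i, i ∉ I → x i = 0 := by
    intro i hi
    by_contra h
    exact hi (hxsupp (by simp [supp, h]))
  set u : Fin n → ℝ := restr (fun i => x i - xstar i) I with hu
  set v : Fin n → ℝ := restr xstar (Istar \ I) with hv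
  -- disjoint supports
  have huv0 : ∀ i, u i * v i = 0 := by
    intro i
    by_cases hiI : i ∈ I
    · have : v i = 0 := by simp [hv, restr, Finset.mem_sdiff, hiI]
      rw [this, mul_zero]
    · have : u i = 0 := by simp [hu, restr, hiI]
      rw [this, zero_mul]
  -- difference decomposition
  have hdiff : ∀ i, x i - xstar i = u i - v i := by
    intro i
    by_cases hiI : i ∈ I
    · simp [hu, hv, restr, Finset.mem_sdiff, hiI]
    · by_cases hiS : i ∈ Istar
      · simp [hu, hv, restr, Finset.mem_sdiff, hiI, hiS, hx0 i hiI]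
      · simp [hu, hv, restr, Finset.mem_sdiff, hiI, hiS, hx0 i hiI, hxstar0 i hiS]
  set A2 : ℝ := ∑ i, (u i)^2 with hA2def
  set C2 : ℝ := ∑ i, (v i)^2 with hC2def
  set au : Fin m → ℝ := A.mulVec u with hau
  set av : Fin m → ℝ := A.mulVec v with hav
  set q : ℝ := ∑ j, (au j)^2 with hqdef
  set w : ℝ := ∑ j, (av j)^2 with hwdef
  set p : ℝ := ∑ j, au j * av j with hpdef
  have hA2 : (0:ℝ) ≤ A2 := Finset.sum_nonneg fun _ _ => sq_nonneg _
  have hC2 : (0:ℝ) ≤ C2 := Finset.sum_nonneg fun _ _ => sq_nonneg _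
  have hnu2 : (nrm u)^2 = A2 := nrm_sq' u
  have hnv2 : (nrm v)^2 = C2 := nrm_sq' v
  -- combination lemmas
  have hcombo : ∀ s t : ℝ, (nrm (fun i => s * u i + t * v i))^2 = s^2*A2 + t^2*C2 := by
    intro s t
    rw [nrm_sq']
    calc ∑ i, (s * u i + t * v i)^2
        = ∑ i, (s^2*(u i)^2 + t^2*(v i)^2) := by
          refine Finset.sum_congr rfl fun i _ => ?_
          linear_combination (2*s*t) * huv0 i
      _ = s^2*A2 + t^2*C2 := by
          rw [Finset.sum_add_distrib, ← Finset.mul_sum, ← Finset.mul_sum]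
  have hmv : ∀ s t : ℝ, ∀ j, A.mulVec (fun i => s * u i + t * v i) j = s * au j + t * av j := by
    intro s t j
    have he : (fun i => s * u i + t * v i) = s • u + t • v := by
      funext i; simp
    rw [he, Matrix.mulVec_add, Matrix.mulVec_smul, Matrix.mulVec_smul]
    simp [hau, hav]
  have hanorm : ∀ s t : ℝ, (nrm (A.mulVec (fun i => s * u i + t * v i)))^2
      = s^2*q + 2*s*t*p + t^2*w := by
    intro s t
    rw [nrm_sq']
    calc ∑ j, (A.mulVec (fun i => s * u i + t * v i) j)^2
        = ∑ j, (s^2*(au j)^2 + (2*s*t)*(au j * av j) + t^2*(av j)^2) := by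
          refine Finset.sum_congr rfl fun j _ => ?_
          rw [hmv s t j]; ring
      _ = s^2*q + 2*s*t*p + t^2*w := by
          rw [Finset.sum_add_distrib, Finset.sum_add_distrib, ← Finset.mul_sum,
            ← Finset.mul_sum, ← Finset.mul_sum]
  have hsupp : ∀ s t : ℝ, supp (fun i => s * u i + t * v i) ⊆ I ∪ Istar := by
    intro s t i hi
    by_contra hmem
    rw [Finset.mem_union] at hmem
    push_neg at hmem
    have h1 : u i = 0 := by simp [hu, restr, hmem.1]
    have h2 : v i = 0 := by simp [hv, restr, Finset.mem_sdiff, hmem.2]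
    simp [supp, h1, h2] at hi
  have hRIPc : ∀ s t : ℝ, (1-δ)*(s^2*A2 + t^2*C2) ≤ s^2*q + 2*s*t*p + t^2*w ∧
      s^2*q + 2*s*t*p + t^2*w ≤ (1+δ)*(s^2*A2 + t^2*C2) := by
    intro s t
    have h := hrip (fun i => s * u i + t * v i) (Finset.card_le_card (hsupp s t))
    rw [hcombo s t, hanorm s t] at h
    exact h
  -- least squares condition gives p = q
  have hpq : p = q := by
    have hxu : x - xstar = u - v := by
      funext i; exact hdiff i
    have hrfun : A.mulVec x - b = fun j => au j - av j := by
      rw [hb]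
      calc A.mulVec x - A.mulVec xstar = A.mulVec (x - xstar) := (Matrix.mulVec_sub A x xstar).symm
        _ = A.mulVec (u - v) := by rw [hxu]
        _ = fun j => au j - av j := by rw [Matrix.mulVec_sub, hau, hav]; rfl
    have hr : ∀ j, A.mulVec x j - b j = au j - av j := by
      intro j
      have h := congrFun hrfun j
      simpa using h
    have hsum : ∑ j, au j * (au j - av j) = 0 := by
      calc ∑ j, au j * (au j - av j)
          = ∑ j, ∑ i, A j i * u i * (A.mulVec x j - b j) := by
            refine Finset.sum_congr rfl fun j _ => ?_
            rw [hr j, ← Finset.sum_mul]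
            congr 1
        _ = ∑ i, u i * (∑ j, A j i * (A.mulVec x j - b j)) := by
            rw [Finset.sum_comm]
            refine Finset.sum_congr rfl fun i _ => ?_
            rw [Finset.mul_sum]
            refine Finset.sum_congr rfl fun j _ => by ring
        _ = 0 := by
            refine Finset.sum_eq_zero fun i _ => ?_
            by_cases hiI : i ∈ I
            · have h := hls i hiI
              have h2 : ∑ j, A j i * (A.mulVec x j - b j) = 0 := by
                simpa [Matrix.mulVec, dotProduct, Matrix.transpose_apply, Pi.sub_apply] using h
              rw [h2, mul_zero]
            · have : u i = 0 := by simp [hu, restr, hiI]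
              rw [this, zero_mul]
    have hqp : ∑ j, au j * (au j - av j) = q - p := by
      rw [hqdef, hpdef, ← Finset.sum_sub_distrib]
      refine Finset.sum_congr rfl fun j _ => by ring
    linarith [hsum, hqp ▸ hsum]
  -- diagonal bounds
  have h10 := hRIPc 1 0
  have hq_lb : (1-δ)*A2 ≤ q := by nlinarith [h10.1]
  have hq_ub : q ≤ (1+δ)*A2 := by nlinarith [h10.2]
  -- discriminant inequalities
  have hP1 : ∀ t : ℝ, 0 ≤ (w - (1-δ)*C2) * (t*t) + (2*q) * t + (q - (1-δ)*A2) := by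
    intro t
    have h := (hRIPc 1 t).1
    rw [hpq] at h
    nlinarith [h]
  have hP2 : ∀ t : ℝ, 0 ≤ ((1+δ)*C2 - w) * (t*t) + (-(2*q)) * t + ((1+δ)*A2 - q) := by
    intro t
    have h := (hRIPc 1 t).2
    rw [hpq] at h
    nlinarith [h]
  have hD1 : q^2 ≤ (w - (1-δ)*C2) * (q - (1-δ)*A2) := by
    have h := discrim_le_zero hP1
    rw [discrim] at h
    nlinarith [h]
  have hD2 : q^2 ≤ ((1+δ)*C2 - w) * ((1+δ)*A2 - q) := by
    have h := discrim_le_zero hP2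
    rw [discrim] at h
    nlinarith [h]
  have h1δ2 : (0:ℝ) < 1 - δ^2 := by nlinarith
  -- the key inequality
  have hA : (1-δ^2)*A2 ≤ δ^2*C2 := by
    by_cases hq0 : q = 0
    · have hA20 : A2 = 0 := by nlinarith [hq_lb]
      rw [hA20]
      have : (0:ℝ) ≤ δ^2*C2 := mul_nonneg (sq_nonneg δ) hC2
      linarith
    · have hq2 : 0 < q^2 := lt_of_le_of_ne (sq_nonneg q) (Ne.symm (pow_ne_zero 2 hq0))
      by_cases hδ' : δ = 0
      · exfalso
        subst hδ'
        have hqa : q = A2 := le_antisymm (by linarith) (by linarith)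
        rw [hqa] at hD1 hq2
        nlinarith [hD1, hq2]
      · have hδpos : 0 < δ := lt_of_le_of_ne hδ0 (Ne.symm hδ')
        have hμ1 : (0:ℝ) ≤ (1+δ)*A2 - q := by linarith
        have hμ2 : (0:ℝ) ≤ q - (1-δ)*A2 := by linarith
        have e1 := mul_le_mul_of_nonneg_left hD1 hμ1
        have e2 := mul_le_mul_of_nonneg_left hD2 hμ2
        have hc : (2*δ) * (A2*q^2) ≤ (2*δ) * (C2*(((1+δ)*A2 - q)*(q - (1-δ)*A2))) := by
          nlinarith [e1, e2]
        have hc2 : A2*q^2 ≤ C2*(((1+δ)*A2 - q)*(q - (1-δ)*A2)) :=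
          le_of_mul_le_mul_left hc (by linarith)
        have hkey : (1-δ^2)*(((1+δ)*A2 - q)*(q - (1-δ)*A2)) ≤ δ^2*q^2 := by
          nlinarith [sq_nonneg (q - (1-δ^2)*A2)]
        have hfin : ((1-δ^2)*A2)*q^2 ≤ (δ^2*C2)*q^2 := by
          nlinarith [mul_le_mul_of_nonneg_left hc2 h1δ2.le,
            mul_le_mul_of_nonneg_left hkey hC2]
        exact le_of_mul_le_mul_right hfin hq2
  constructor
  · -- main inequality
    have hs : 0 < Real.sqrt (1 - δ^2) := Real.sqrt_pos.mpr h1δ2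
    have hss : (Real.sqrt (1-δ^2))^2 = 1-δ^2 := Real.sq_sqrt h1δ2.le
    have hun : 0 ≤ nrm u := Real.sqrt_nonneg _
    have hvn : 0 ≤ nrm v := Real.sqrt_nonneg _
    have hrhs : 0 ≤ δ / Real.sqrt (1-δ^2) * nrm v := by positivity
    have hsq : (nrm u)^2 ≤ (δ / Real.sqrt (1-δ^2) * nrm v)^2 := by
      have he : (δ / Real.sqrt (1-δ^2) * nrm v)^2 = δ^2 * (nrm v)^2 / (1-δ^2) := by
        rw [mul_pow, div_pow, hss]; ring
      rw [he, hnu2, hnv2, le_div_iff₀ h1δ2]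
      linarith [hA]
    calc nrm u = Real.sqrt ((nrm u)^2) := (Real.sqrt_sq hun).symm
      _ ≤ Real.sqrt ((δ / Real.sqrt (1-δ^2) * nrm v)^2) := Real.sqrt_le_sqrt hsq
      _ = δ / Real.sqrt (1-δ^2) * nrm v := Real.sqrt_sq hrhs
  · -- orthogonal decomposition
    rw [hnu2, nrm_sq', nrm_sq', hA2def, ← Finset.sum_add_distrib]
    refine Finset.sum_congr rfl fun i _ => ?_
    by_cases hiI : i ∈ I
    · by_cases hiS : i ∈ Istar
      · simp [hu, restr, Finset.mem_inter, Finset.mem_sdiff, hiI, hiS]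
      · simp [hu, restr, Finset.mem_inter, Finset.mem_sdiff, hiI, hiS, hxstar0 i hiS]
    · simp [hu, restr, Finset.mem_inter, Finset.mem_sdiff, hiI]
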